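/- In the free associative algebra 𝒜 on generators X₁,…,Xₙ over a field of characteristic zero, let J be the two-sided ideal generated by all elements XᵢXⱼ − XⱼXᵢ − [Xᵢ,Xⱼ], where [·,·] is a Lie bracket on the span L of the Xᵢ. Then the difference of any two equipollent monomials of degree m is congruent modulo J to a polynomial of degree at most m−1. -/

import Mathlib

open scoped BigOperators

noncomputable section

/-- The word `X₁^{α₁} ⋯ Xₙ^{αₙ}` as a list of generator indices. -/
def word (n : ℕ) (α : Fin n → ℕ) : List (Fin n) :=
  (List.finRange n).flatMap fun i => List.replicate (α i) i

/-- The symmetrization `symz(X^(α)) = (1/m!) ∑_{σ ∈ Σₘ} X'_{σ(1)} ⋯ X'_{σ(m)}`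
of the monomial `X^(α)` in the free associative algebra. -/
def symz (K : Type) [Field K] (n : ℕ) (α : Fin n → ℕ) : FreeAlgebra K (Fin n) :=
  ((Nat.factorial (word n α).length : K))⁻¹ •
    ∑ σ : Equiv.Perm (Fin (word n α).length),
      (List.ofFn fun j => FreeAlgebra.ι K ((word n α).get (σ j))).prod

/-- Regular homogeneous polynomials of degree `m`: the span of `m`-th powers of
linear forms in the generators. -/
def RegHom (K : Type) [Field K] (n m : ℕ) : Submodule K (FreeAlgebra K (Fin n)) :=
  Submodule.span K {x | ∃ c : Fin n → K, x = (∑ i, c i • FreeAlgebra.ι K i) ^ m}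

/-- Regular polynomials: the span of all powers of linear forms in the generators. -/
def Reg (K : Type) [Field K] (n : ℕ) : Submodule K (FreeAlgebra K (Fin n)) :=
  Submodule.span K {x | ∃ (m : ℕ) (c : Fin n → K), x = (∑ i, c i • FreeAlgebra.ι K i) ^ m}

/-- The symmetrization map `Φ` from commutative polynomials to the free algebra,
sending `x^(α)` to `symz(X^(α))` and extended linearly. -/
def Phi (K : Type) [Field K] (n : ℕ) (p : MvPolynomial (Fin n) K) : FreeAlgebra K (Fin n) :=
  ∑ d ∈ p.support, p.coeff d • symz K n (fun i => d i)


/-- The embedding of the Lie algebra `L` into the free algebra via the basis `b`. -/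
def emb (K : Type) [Field K] (n : ℕ) {L : Type} [LieRing L] [LieAlgebra K L]
    (b : Module.Basis (Fin n) K L) (x : L) : FreeAlgebra K (Fin n) :=
  ∑ k, b.repr x k • FreeAlgebra.ι K k

/-- The two-sided ideal `J` generated by `XY - YX - [X,Y]`, `X, Y ∈ L`, realized as the
span of all trinomial products `P (XY - YX - [X,Y]) Q`. -/
def Jspan (K : Type) [Field K] (n : ℕ) {L : Type} [LieRing L] [LieAlgebra K L]
    (b : Module.Basis (Fin n) K L) : Submodule K (FreeAlgebra K (Fin n)) :=
  Submodule.span K {x | ∃ (P Q : FreeAlgebra K (Fin n)) (X Y : L),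
    x = P * (emb K n b X * emb K n b Y - emb K n b Y * emb K n b X - emb K n b ⁅X, Y⁆) * Q}

/-- Elements of degree at most `k` in the free algebra. -/
def Fdeg (K : Type) [Field K] (n k : ℕ) : Submodule K (FreeAlgebra K (Fin n)) :=
  Submodule.span K {x | ∃ l : List (Fin n), l.length ≤ k ∧ x = (l.map (FreeAlgebra.ι K)).prod}

/-! A permutation of the letters of a word is a product of adjacent transpositions. Modulo `J`,
swapping two adjacent letters `XᵢXⱼ ↦ XⱼXᵢ` changes a monomial by `[Xᵢ,Xⱼ]` times the
remaining letters, which has degree one less because `[Xᵢ,Xⱼ] ∈ L` is linear. Left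
multiplication by a generator raises degrees by one and preserves `J`, so these corrections
propagate through the common prefix of the two words. -/

variable {K : Type} [Field K] {n : ℕ} {L : Type} [LieRing L] [LieAlgebra K L]
  (b : Module.Basis (Fin n) K L)

lemma emb_basis (i : Fin n) : emb K n b (b i) = FreeAlgebra.ι K i := by
  simp [emb, Finsupp.single_apply]

lemma ι_mul_mem_Fdeg {k : ℕ} (a : Fin n) {x : FreeAlgebra K (Fin n)} (hx : x ∈ Fdeg K n k) :
    FreeAlgebra.ι K a * x ∈ Fdeg K n (k + 1) := by
  induction hx using Submodule.span_induction with
  | mem z hz =>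
    obtain ⟨l, hl, rfl⟩ := hz
    exact Submodule.subset_span ⟨a :: l, by simpa using hl, by simp⟩
  | zero => simp
  | add x y _ _ hx hy => rw [mul_add]; exact add_mem hx hy
  | smul c x _ hx => rw [mul_smul_comm]; exact Submodule.smul_mem _ _ hx

lemma emb_mul_mem_Fdeg {k : ℕ} (z : L) {x : FreeAlgebra K (Fin n)} (hx : x ∈ Fdeg K n k) :
    emb K n b z * x ∈ Fdeg K n (k + 1) := by
  rw [emb, Finset.sum_mul]
  refine Submodule.sum_mem _ fun i _ => ?_
  rw [smul_mul_assoc]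
  exact Submodule.smul_mem _ _ (ι_mul_mem_Fdeg i hx)

lemma mul_mem_Jspan_left (r : FreeAlgebra K (Fin n)) {x : FreeAlgebra K (Fin n)}
    (hx : x ∈ Jspan K n b) : r * x ∈ Jspan K n b := by
  induction hx using Submodule.span_induction with
  | mem z hz =>
    obtain ⟨P, Q, X, Y, rfl⟩ := hz
    exact Submodule.subset_span ⟨r * P, Q, X, Y, by simp only [mul_assoc]⟩
  | zero => simp
  | add x y _ _ hx hy => rw [mul_add]; exact add_mem hx hy
  | smul c x _ hx => rw [mul_smul_comm]; exact Submodule.smul_mem _ _ hx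

lemma ι_mul_mem_Fdeg_sup_Jspan {k : ℕ} (a : Fin n) {x : FreeAlgebra K (Fin n)}
    (hx : x ∈ Fdeg K n k ⊔ Jspan K n b) :
    FreeAlgebra.ι K a * x ∈ Fdeg K n (k + 1) ⊔ Jspan K n b := by
  obtain ⟨y, hy, z, hz, rfl⟩ := Submodule.mem_sup.1 hx
  rw [mul_add]
  exact Submodule.add_mem_sup (ι_mul_mem_Fdeg a hy) (mul_mem_Jspan_left b _ hz)

lemma ι_mul_ι_mul_sub_mem_Fdeg_sup_Jspan {k : ℕ} (i j : Fin n) {p : FreeAlgebra K (Fin n)}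
    (hp : p ∈ Fdeg K n k) :
    FreeAlgebra.ι K i * (FreeAlgebra.ι K j * p) - FreeAlgebra.ι K j * (FreeAlgebra.ι K i * p)
      ∈ Fdeg K n (k + 1) ⊔ Jspan K n b := by
  have hJ : (emb K n b (b i) * emb K n b (b j) - emb K n b (b j) * emb K n b (b i)
      - emb K n b ⁅b i, b j⁆) * p ∈ Jspan K n b :=
    Submodule.subset_span ⟨1, p, b i, b j, by rw [one_mul]⟩
  have hsplit : FreeAlgebra.ι K i * (FreeAlgebra.ι K j * p)
        - FreeAlgebra.ι K j * (FreeAlgebra.ι K i * p)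
      = emb K n b ⁅b i, b j⁆ * p + (emb K n b (b i) * emb K n b (b j)
          - emb K n b (b j) * emb K n b (b i) - emb K n b ⁅b i, b j⁆) * p := by
    simp only [emb_basis]
    noncomm_ring
  rw [hsplit]
  exact Submodule.add_mem_sup (emb_mul_mem_Fdeg b _ hp) hJ

lemma prod_map_ι_sub_mem_of_perm {l₁ l₂ : List (Fin n)} (h : l₁.Perm l₂) :
    (l₁.map (FreeAlgebra.ι K)).prod - (l₂.map (FreeAlgebra.ι K)).prod
      ∈ Fdeg K n (l₁.length - 1) ⊔ Jspan K n b := by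
  induction h with
  | nil => simp
  | @cons a t₁ t₂ h ih =>
    rcases t₁ with _ | ⟨c, t⟩
    · simp [List.Perm.eq_nil h.symm]
    · simpa [mul_sub] using ι_mul_mem_Fdeg_sup_Jspan b a ih
  | swap i j l =>
    have hl : (l.map (FreeAlgebra.ι K)).prod ∈ Fdeg K n l.length :=
      Submodule.subset_span ⟨l, le_rfl, rfl⟩
    simpa using ι_mul_ι_mul_sub_mem_Fdeg_sup_Jspan b j i hl
  | trans h₁₂ _ ih₁₂ ih₂₃ =>
    rw [← h₁₂.length_eq] at ih₂₃
    simpa using add_mem ih₁₂ ih₂₃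

theorem equipollent_difference_lower_degree_mod_J (K : Type) [Field K]
    (n : ℕ) (L : Type) [LieRing L] [LieAlgebra K L] (b : Module.Basis (Fin n) K L)
    (m : ℕ) (w : Fin m → Fin n) (σ : Equiv.Perm (Fin m)) :
    ∃ y ∈ Fdeg K n (m - 1),
      ((List.ofFn fun j => FreeAlgebra.ι K (w j)).prod
          - (List.ofFn fun j => FreeAlgebra.ι K (w (σ j))).prod) - y
        ∈ Jspan K n b := by
  have h := prod_map_ι_sub_mem_of_perm b (σ.ofFn_comp_perm w).symm
  simp only [List.length_ofFn, List.map_ofFn, Function.comp_def] at h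
  obtain ⟨y, hy, z, hz, hyz⟩ := Submodule.mem_sup.1 h
  exact ⟨y, hy, by rwa [← hyz, add_sub_cancel_left]⟩

end
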